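/- (Fill-in pattern of the modified Cholesky factor equals the triangulation.) Let G be a graph on {1,…,p} with edge set E and let D(E) = D^{id}(E) be the triangulation of E under the identity ordering. For every i > j with (i,j) ∉ E, the dependent entry L_{ij}, viewed as a function of (L_I, D) on ℝ^m × (0,∞)^p, is NOT identically zero if and only if (i,j) ∈ D(E). Equivalently, L_{ij} ≡ 0 as a function of (L_I,D) if and only if (i,j) ∉ D(E). -/

import Mathlib

open SimpleGraph

variable {V : Type*}

/-- One step of the elimination/triangulation process: at step `k` (0-based) the vertex with
label `k` is eliminated, and all pairs of its neighbours with larger labels are joined. -/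
def triStep {n : ℕ} (σ : V ≃ Fin n) (H : SimpleGraph V) (k : ℕ) : SimpleGraph V where
  Adj u v := H.Adj u v ∨
    (u ≠ v ∧ ∃ hk : k < n, k < (σ u : ℕ) ∧ k < (σ v : ℕ) ∧
      H.Adj u (σ.symm ⟨k, hk⟩) ∧ H.Adj v (σ.symm ⟨k, hk⟩))
  symm := by
    constructor
    rintro u v (h | ⟨hne, hk, h1, h2, h3, h4⟩)
    · exact Or.inl h.symm
    · exact Or.inr ⟨hne.symm, hk, h2, h1, h4, h3⟩
  loopless := by
    constructor
    rintro u (h | ⟨hne, _⟩)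
    · exact H.loopless.irrefl u h
    · exact hne rfl

/-- The sequence of graphs `E_0, E_1, …` in the triangulation process. -/
def triSeq {n : ℕ} (σ : V ≃ Fin n) (G : SimpleGraph V) : ℕ → SimpleGraph V
  | 0 => G
  | k + 1 => triStep σ (triSeq σ G k) k

/-- The triangulation `D^σ(G)` of `G` under the ordering `σ` (`p − 2` elimination steps). -/
def triangulation {n : ℕ} (σ : V ≃ Fin n) (G : SimpleGraph V) : SimpleGraph V :=
  triSeq σ G (n - 2)

/-- `σ` is a perfect elimination ordering of `G`: for every `j`, the vertex `σ⁻¹(j)` together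
with its higher-labelled neighbours forms a clique. -/
def IsPerfectElimOrdering {n : ℕ} (σ : V ≃ Fin n) (G : SimpleGraph V) : Prop :=
  ∀ j : Fin n,
    G.IsClique ({σ.symm j} ∪ {v : V | (j : ℕ) < (σ v : ℕ) ∧ G.Adj v (σ.symm j)})

/-- A graph is decomposable (chordal) if it has no induced cycle of length `≥ 4`. -/
def IsDecomposable (G : SimpleGraph V) : Prop :=
  ∀ n : ℕ, 4 ≤ n → IsEmpty (SimpleGraph.cycleGraph n ↪g G)

/-- `σ` is a Generalized Bartlett ordering of `G`: no triangle of `D^σ(G)` consists of three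
non-edges of `G`. -/
def IsGBOrdering {n : ℕ} (σ : V ≃ Fin n) (G : SimpleGraph V) : Prop :=
  ¬ ∃ u v w : V,
      ¬ G.Adj u v ∧ ¬ G.Adj v w ∧ ¬ G.Adj u w ∧
      (triangulation σ G).Adj u v ∧ (triangulation σ G).Adj v w ∧
      (triangulation σ G).Adj u w

/-- `G` is a Generalized Bartlett graph: it admits a Generalized Bartlett ordering. -/
def IsGB (G : SimpleGraph V) : Prop :=
  ∃ (n : ℕ) (σ : V ≃ Fin n), IsGBOrdering σ G

open scoped Classical BigOperators

/-- Column `j` (as a natural number), row `i`, of the modified Cholesky factor `L(L_I, D)`. -/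
noncomputable def cholCol (p : ℕ) (G : SimpleGraph (Fin p)) (ℓ : Fin p → Fin p → ℝ)
    (D : Fin p → ℝ) : ℕ → Fin p → ℝ
  | j => fun i =>
    if hj : j < p then
      if (i : ℕ) = j then 1
      else if (i : ℕ) < j then 0
      else if G.Adj i ⟨j, hj⟩ then ℓ i ⟨j, hj⟩
      else -(∑ k ∈ (Finset.range j).attach,
          cholCol p G ℓ D k.1 i * cholCol p G ℓ D k.1 ⟨j, hj⟩ *
            D ⟨k.1, (Finset.mem_range.mp k.2).trans hj⟩) / D ⟨j, hj⟩
    else 0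
termination_by j => j
decreasing_by all_goals exact Finset.mem_range.mp k.2

/-! Write `E_k` for the graph after `k` elimination steps. For `i > j` the entry `L_{ij}` is
either a free parameter (an edge of `G`) or `-(∑_{k<j} L_{ik} L_{jk} D_k) / D_j`. By strong
induction on `j` it vanishes identically when `(i, j) ∉ E_j`: a nonzero term would need
`(i, k), (j, k) ∈ E_k`, and then eliminating `k` fills in `(i, j)`. Conversely, with `ℓ ≡ -1` and
`D ≡ 1` all strictly lower entries are `≤ 0`, so the terms of the sum cannot cancel and every entry
with `(i, j) ∈ E_j` is `≤ -1`. Finally, elimination step `k` only joins vertices of label `> k`,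
so the edges at `j` are final after step `j` and `E_j` agrees with the triangulation there. -/

section Triangulation

variable {n : ℕ} (σ : V ≃ Fin n) (G : SimpleGraph V)

theorem le_triStep (k : ℕ) : G ≤ triStep σ G k := fun _ _ => Or.inl

theorem triSeq_mono : Monotone (triSeq σ G) :=
  monotone_nat_of_le_succ fun k => le_triStep σ _ k

variable {σ G}

theorem triSeq_succ_adj_of_adj_of_adj {k : Fin n} {u v : V} (huv : u ≠ v)
    (hu : k < σ u) (hv : k < σ v)
    (hku : (triSeq σ G k).Adj u (σ.symm k)) (hkv : (triSeq σ G k).Adj v (σ.symm k)) :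
    (triSeq σ G (k + 1)).Adj u v :=
  Or.inr ⟨huv, k.isLt, hu, hv, hku, hkv⟩

theorem exists_lt_of_triSeq_adj {j : ℕ} {u v : V} (h : (triSeq σ G j).Adj u v)
    (hG : ¬ G.Adj u v) :
    ∃ k : Fin n, (k : ℕ) < j ∧ k < σ u ∧ k < σ v ∧
      (triSeq σ G k).Adj u (σ.symm k) ∧ (triSeq σ G k).Adj v (σ.symm k) := by
  induction j with
  | zero => exact absurd h hG
  | succ j ih =>
    rcases h with h | ⟨-, hj, hu, hv, hju, hjv⟩
    · obtain ⟨k, hkj, rest⟩ := ih h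
      exact ⟨k, hkj.trans j.lt_succ_self, rest⟩
    · exact ⟨⟨j, hj⟩, j.lt_succ_self, hu, hv, hju, hjv⟩

theorem triSeq_adj_iff_of_le {k : ℕ} {u v : V} (hv : (σ v : ℕ) ≤ k) :
    (triSeq σ G k).Adj u v ↔ (triSeq σ G (σ v)).Adj u v := by
  induction k, hv using Nat.le_induction with
  | base => rfl
  | succ k hvk ih =>
    refine ⟨fun h => ih.1 ?_, fun h => triSeq_mono σ G k.le_succ (ih.2 h)⟩
    rcases h with h | ⟨-, -, -, hv', -⟩
    · exact h
    · exact absurd hv' (by omega)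

theorem triangulation_adj_iff {u v : V} (h : σ v < σ u) :
    (triangulation σ G).Adj u v ↔ (triSeq σ G (σ v)).Adj u v :=
  triSeq_adj_iff_of_le (by have := (σ u).isLt; rw [Fin.lt_def] at h; omega)

end Triangulation

section CholeskyFactor

variable {p : ℕ} {G : SimpleGraph (Fin p)} {ℓ : Fin p → Fin p → ℝ} {D : Fin p → ℝ}

theorem cholCol_of_adj {i j : Fin p} (hji : j < i) (hG : G.Adj i j) :
    cholCol p G ℓ D j i = ℓ i j := by
  rw [Fin.lt_def] at hji
  rw [cholCol]; beta_reduce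
  rw [dif_pos j.isLt, if_neg hji.ne', if_neg hji.not_gt, if_pos hG]

theorem cholCol_of_not_adj {i j : Fin p} (hji : j < i) (hG : ¬ G.Adj i j) :
    cholCol p G ℓ D j i =
      -(∑ k ∈ Finset.Iio j, cholCol p G ℓ D k i * cholCol p G ℓ D k j * D k) / D j := by
  rw [Fin.lt_def] at hji
  rw [cholCol]; beta_reduce
  rw [dif_pos j.isLt, if_neg hji.ne', if_neg hji.not_gt, if_neg hG]
  congr 2
  refine Finset.sum_bij' (fun k _ => ⟨k.1, (Finset.mem_range.mp k.2).trans j.isLt⟩)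
    (fun (k : Fin p) hk => ⟨k, Finset.mem_range.mpr (Fin.lt_def.mp (Finset.mem_Iio.mp hk))⟩)
    (fun k _ => Finset.mem_Iio.mpr (Finset.mem_range.mp k.2)) ?_ ?_ ?_ ?_ <;> simp

theorem cholCol_eq_zero_of_not_adj_triSeq {i j : Fin p} (hji : j < i)
    (hE : ¬ (triSeq (Equiv.refl (Fin p)) G j).Adj i j) : cholCol p G ℓ D j i = 0 := by
  induction j using WellFoundedLT.induction generalizing i with
  | _ j ih =>
    have hG : ¬ G.Adj i j := fun h => hE (triSeq_mono _ G (Nat.zero_le _) h)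
    rw [cholCol_of_not_adj hji hG, Finset.sum_eq_zero, neg_zero, zero_div]
    intro k hk
    have hkj : k < j := Finset.mem_Iio.mp hk
    have hfill : ¬ ((triSeq (Equiv.refl (Fin p)) G k).Adj i k ∧
        (triSeq (Equiv.refl (Fin p)) G k).Adj j k) := fun ⟨hi, hj⟩ =>
      hE (triSeq_mono _ G (Nat.succ_le_of_lt hkj)
        (triSeq_succ_adj_of_adj_of_adj hji.ne' (hkj.trans hji) hkj hi hj))
    rcases not_and_or.mp hfill with h | h
    · rw [ih k hkj (hkj.trans hji) h, zero_mul, zero_mul]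
    · rw [ih k hkj hkj h, mul_zero, zero_mul]

theorem cholCol_nonpos (hℓ : ∀ a b, ℓ a b ≤ 0) (hD : ∀ k, 0 ≤ D k) {i j : Fin p} (hji : j < i) :
    cholCol p G ℓ D j i ≤ 0 := by
  induction j using WellFoundedLT.induction generalizing i with
  | _ j ih =>
    by_cases hG : G.Adj i j
    · rw [cholCol_of_adj hji hG]
      exact hℓ i j
    · rw [cholCol_of_not_adj hji hG, neg_div]
      refine neg_nonpos.mpr (div_nonneg (Finset.sum_nonneg fun k hk => ?_) (hD j))
      have hkj : k < j := Finset.mem_Iio.mp hk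
      exact mul_nonneg (mul_nonneg_of_nonpos_of_nonpos (ih k hkj (hkj.trans hji)) (ih k hkj hkj))
        (hD k)

theorem cholCol_le_neg_one_of_adj_triSeq (hℓ : ∀ a b, ℓ a b ≤ -1) {i j : Fin p} (hji : j < i)
    (hE : (triSeq (Equiv.refl (Fin p)) G j).Adj i j) :
    cholCol p G ℓ (fun _ => 1) j i ≤ -1 := by
  induction j using WellFoundedLT.induction generalizing i with
  | _ j ih =>
    by_cases hG : G.Adj i j
    · rw [cholCol_of_adj hji hG]
      exact hℓ i j
    obtain ⟨k, hkj, hki, -, hik, hjk⟩ := exists_lt_of_triSeq_adj hE hG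
    have hℓ' : ∀ a b, ℓ a b ≤ 0 := fun a b => (hℓ a b).trans (by norm_num)
    have hnonpos {a b : Fin p} (hba : b < a) : cholCol p G ℓ (fun _ => 1) b a ≤ 0 :=
      cholCol_nonpos hℓ' (fun _ => zero_le_one) hba
    have hterm_nonneg : ∀ k ∈ Finset.Iio j,
        0 ≤ cholCol p G ℓ (fun _ => 1) k i * cholCol p G ℓ (fun _ => 1) k j * 1 := fun k hk =>
      have hkj : k < j := Finset.mem_Iio.mp hk
      mul_nonneg (mul_nonneg_of_nonpos_of_nonpos (hnonpos (hkj.trans hji)) (hnonpos hkj))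
        zero_le_one
    have hterm : 1 ≤ cholCol p G ℓ (fun _ => 1) k i * cholCol p G ℓ (fun _ => 1) k j * 1 := by
      have hki' : cholCol p G ℓ (fun _ => 1) k i ≤ -1 := ih k hkj hki hik
      have hkj' : cholCol p G ℓ (fun _ => 1) k j ≤ -1 := ih k hkj hkj hjk
      nlinarith
    rw [cholCol_of_not_adj hji hG, div_one, neg_le_neg_iff]
    exact hterm.trans (Finset.single_le_sum hterm_nonneg (Finset.mem_Iio.mpr hkj))

end CholeskyFactor

/-- fill-in pattern of the modified Cholesky factor equals the triangulation.
For `i > j` with `(i,j) ∉ E`, the dependent entry `L_{ij}` is not identically zero as a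
function of `(L_I, D)` on `ℝ^m × (0,∞)^p` if and only if `(i,j) ∈ D^{id}(E)`. -/
theorem cholesky_fillin_iff_mem_triangulation (p : ℕ) (G : SimpleGraph (Fin p)) :
    ∀ i j : Fin p, j < i → ¬ G.Adj i j →
      ((∃ (ℓ : Fin p → Fin p → ℝ) (D : Fin p → ℝ),
          (∀ k, 0 < D k) ∧ cholCol p G ℓ D (j : ℕ) i ≠ 0) ↔
        (triangulation (Equiv.refl (Fin p)) G).Adj i j) := by
  intro i j hji _
  rw [triangulation_adj_iff (σ := Equiv.refl (Fin p)) hji]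
  constructor
  · rintro ⟨ℓ, D, -, hL⟩
    by_contra hE
    exact hL (cholCol_eq_zero_of_not_adj_triSeq hji hE)
  · intro hE
    refine ⟨fun _ _ => -1, fun _ => 1, fun _ => one_pos, ?_⟩
    have hL := cholCol_le_neg_one_of_adj_triSeq (fun _ _ => le_rfl) hji hE
    exact (hL.trans_lt (by norm_num)).ne
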